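/- The matching μ on the cubes of Ω_n is acyclic: there do not exist an integer q ≥ 2 and distinct cubes σ₁,…,σ_q ∈ M↓, all of the same dimension, such that μ₊(σ_i) ≻ σ_{i+1} for all 1 ≤ i ≤ q−1 and μ₊(σ_q) ≻ σ₁. -/
import Mathlib


/-- A (potential) cube of the cubical complex `Ω_n`: an ordered 4-tuple of finite
subsets of `ℕ`. -/
structure Cube where
  A : Finset ℕ
  B : Finset ℕ
  C : Finset ℕ
  D : Finset ℕ
deriving DecidableEq

/-- `σ` is a cube of `Ω_n`: the four parts are pairwise disjoint, their union is
`[n] = {1,…,n}`, and `A`, `C` are nonempty. -/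
def IsCube (n : ℕ) (σ : Cube) : Prop :=
  Disjoint σ.A σ.B ∧ Disjoint σ.A σ.C ∧ Disjoint σ.A σ.D ∧
  Disjoint σ.B σ.C ∧ Disjoint σ.B σ.D ∧ Disjoint σ.C σ.D ∧
  σ.A ∪ σ.B ∪ σ.C ∪ σ.D = Finset.Icc 1 n ∧
  σ.A.Nonempty ∧ σ.C.Nonempty

/-- The dimension of a cube, `|B| + |D|`. -/
def Cube.dim (σ : Cube) : ℕ := σ.B.card + σ.D.card

/-- The pivot `α(σ) = min (A ∪ B)`. -/
noncomputable def Cube.alpha (σ : Cube) : ℕ := sInf (↑(σ.A ∪ σ.B) : Set ℕ)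

/-- The pivot `β(σ) = max (B ∪ C)`. -/
noncomputable def Cube.beta (σ : Cube) : ℕ := sSup (↑(σ.B ∪ σ.C) : Set ℕ)

def M1up (σ : Cube) : Prop := σ.alpha ∈ σ.B
def M1down (σ : Cube) : Prop := σ.alpha ∈ σ.A ∧ 2 ≤ σ.A.card
def M2up (σ : Cube) : Prop := σ.A = {σ.alpha} ∧ σ.beta ∈ σ.B
def M2down (σ : Cube) : Prop :=
  σ.A = {σ.alpha} ∧ σ.beta ∈ σ.C ∧ 2 ≤ σ.C.card ∧ σ.alpha < σ.beta
def Mdown (σ : Cube) : Prop := M1down σ ∨ M2down σ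
def Mup (σ : Cube) : Prop := M1up σ ∨ M2up σ
def Critical (σ : Cube) : Prop := ¬ Mdown σ ∧ ¬ Mup σ

/-- The covering relation: `τ` is obtained from `σ` by moving exactly one element
of `B(σ) ∪ D(σ)` into `A(σ)` or into `C(σ)`. -/
def Covers (σ τ : Cube) : Prop :=
  (∃ x ∈ σ.B, τ = ⟨insert x σ.A, σ.B.erase x, σ.C, σ.D⟩) ∨
  (∃ x ∈ σ.B, τ = ⟨σ.A, σ.B.erase x, insert x σ.C, σ.D⟩) ∨
  (∃ x ∈ σ.D, τ = ⟨insert x σ.A, σ.B, σ.C, σ.D.erase x⟩) ∨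
  (∃ x ∈ σ.D, τ = ⟨σ.A, σ.B, insert x σ.C, σ.D.erase x⟩)

open Classical in
/-- The matching `μ₊ : M↓ → M↑`. -/
noncomputable def muPlus (σ : Cube) : Cube :=
  if M1down σ then ⟨σ.A.erase σ.alpha, insert σ.alpha σ.B, σ.C, σ.D⟩
  else ⟨σ.A, insert σ.beta σ.B, σ.C.erase σ.beta, σ.D⟩

@[simp] lemma mkA (a b c d : Finset ℕ) : (Cube.mk a b c d).A = a := rfl
@[simp] lemma mkB (a b c d : Finset ℕ) : (Cube.mk a b c d).B = b := rfl
@[simp] lemma mkC (a b c d : Finset ℕ) : (Cube.mk a b c d).C = c := rfl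
@[simp] lemma mkD (a b c d : Finset ℕ) : (Cube.mk a b c d).D = d := rfl

lemma alpha_le {σ : Cube} {y : ℕ} (hy : y ∈ σ.A ∪ σ.B) : σ.alpha ≤ y :=
  Nat.sInf_le (by simpa using hy)

lemma alpha_mem {σ : Cube} (h : σ.A.Nonempty) : σ.alpha ∈ σ.A ∪ σ.B := by
  obtain ⟨a, ha⟩ := h
  have hne : ((↑(σ.A ∪ σ.B) : Set ℕ)).Nonempty := ⟨a, by simp [ha]⟩
  have h2 := Nat.sInf_mem hne
  exact_mod_cast h2

lemma alpha_eq {σ : Cube} {a : ℕ} (ha : a ∈ σ.A ∪ σ.B)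
    (h : ∀ y ∈ σ.A ∪ σ.B, a ≤ y) : σ.alpha = a :=
  le_antisymm (alpha_le ha)
    (le_csInf ⟨a, by simpa using ha⟩ (fun y hy => h y (by simpa using hy)))

lemma beta_ge {σ : Cube} {y : ℕ} (hy : y ∈ σ.B ∪ σ.C) : y ≤ σ.beta :=
  le_csSup (σ.B ∪ σ.C).bddAbove (by simpa using hy)

lemma beta_eq {σ : Cube} {b : ℕ} (hb : b ∈ σ.B ∪ σ.C)
    (h : ∀ y ∈ σ.B ∪ σ.C, y ≤ b) : σ.beta = b :=
  le_antisymm (csSup_le ⟨b, by simpa using hb⟩ (fun y hy => h y (by simpa using hy)))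
    (beta_ge hb)

lemma not_M1_M2 {σ : Cube} (h1 : M1down σ) (h2 : M2down σ) : False := by
  have := h1.2
  rw [h2.1] at this
  simp at this

lemma muPlus_D (σ : Cube) : (muPlus σ).D = σ.D := by
  unfold muPlus; split <;> rfl

lemma cyc {α : Type*} [PartialOrder α] {q : ℕ} (f : ℕ → α)
    (h : ∀ i < q, f ((i + 1) % q) ≤ f i) : ∀ i < q, f ((i + 1) % q) = f i := by
  rcases Nat.eq_zero_or_pos q with rfl | hq0
  · intro i hi; omega
  have step : ∀ i, i + 1 < q → f (i + 1) ≤ f i := by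
    intro i hi
    have := h i (by omega)
    rwa [Nat.mod_eq_of_lt hi] at this
  have chain : ∀ d i, i + d < q → f (i + d) ≤ f i := by
    intro d
    induction d with
    | zero => intro i _; simp
    | succ d ih =>
      intro i hi
      calc f (i + (d + 1)) = f ((i + d) + 1) := by ring_nf
        _ ≤ f (i + d) := step _ (by omega)
        _ ≤ f i := ih i (by omega)
  have hwrap : f 0 ≤ f (q - 1) := by
    have := h (q - 1) (by omega)
    have heq : (q - 1 + 1) % q = 0 := by
      have : q - 1 + 1 = q := by omega
      rw [this, Nat.mod_self]
    rwa [heq] at this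
  have hall : ∀ i < q, f i = f 0 := by
    intro i hi
    have h1 : f i ≤ f 0 := by
      have := chain i 0 (by omega); simpa using this
    have h2 : f (q - 1) ≤ f i := by
      have := chain (q - 1 - i) i (by omega)
      rwa [show i + (q - 1 - i) = q - 1 by omega] at this
    exact le_antisymm h1 (le_trans hwrap h2)
  intro i hi
  rw [hall i hi, hall ((i + 1) % q) (Nat.mod_lt _ hq0)]


lemma key {n : ℕ} {σ τ : Cube} (hσ : IsCube n σ) (hτ : IsCube n τ)
    (hmτ : Mdown τ) (hc : Covers (muPlus σ) τ)
    (hne : τ ≠ σ) (hDc : τ.D.card = σ.D.card) (hmσ : Mdown σ) :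
    (M1down σ → σ.alpha < τ.alpha) ∧ (M2down σ → M1down τ ∧ τ.alpha = σ.alpha) := by
  obtain ⟨dAB, dAC, dAD, dBC, dBD, dCD, -, hAne, hCne⟩ := hσ
  obtain ⟨tAB, tAC, tAD, tBC, tBD, tCD, -, tAne, tCne⟩ := hτ
  rcases hmσ with h1 | h2
  · -- σ ∈ M1down
    refine ⟨fun _ => ?_, fun h2 => (not_M1_M2 h1 h2).elim⟩
    have hαA : σ.alpha ∈ σ.A := h1.1
    have hαnB : σ.alpha ∉ σ.B := Finset.disjoint_left.mp dAB hαA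
    have hμ : muPlus σ = ⟨σ.A.erase σ.alpha, insert σ.alpha σ.B, σ.C, σ.D⟩ := by
      unfold muPlus; rw [if_pos h1]
    rw [hμ] at hc
    simp only [Covers, mkA, mkB, mkC, mkD] at hc
    rcases hc with ⟨x, hx, hτe⟩ | ⟨x, hx, hτe⟩ | ⟨x, hx, hτe⟩ | ⟨x, hx, hτe⟩
    · -- move x from B' to A'
      rcases Finset.mem_insert.mp hx with rfl | hxB
      · -- x = alpha : τ = σ, contradiction
        exfalso
        apply hne
        rw [hτe, Finset.insert_erase hαA, Finset.erase_insert hαnB]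
      · -- x ∈ B : τ.alpha = σ.alpha ∈ τ.B, contradicts Mdown τ
        exfalso
        have hxα : σ.alpha ≠ x := fun h => hαnB (h ▸ hxB)
        subst hτe
        rw [Finset.erase_insert_of_ne hxα] at tAB hmτ
        have hta : Cube.alpha ⟨insert x (σ.A.erase σ.alpha), insert σ.alpha (σ.B.erase x),
            σ.C, σ.D⟩ = σ.alpha := by
          apply alpha_eq
          · simp
          · intro y hy
            simp only [mkA, mkB, Finset.mem_union, Finset.mem_insert, Finset.mem_erase] at hy
            rcases hy with (rfl | ⟨-, hy⟩) | (rfl | ⟨-, hy⟩)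
            · exact alpha_le (Finset.mem_union_right _ hxB)
            · exact alpha_le (Finset.mem_union_left _ hy)
            · exact le_refl _
            · exact alpha_le (Finset.mem_union_right _ hy)
        have hαtB : σ.alpha ∈ (⟨insert x (σ.A.erase σ.alpha), insert σ.alpha (σ.B.erase x),
            σ.C, σ.D⟩ : Cube).B := by simp
        have hαtA : σ.alpha ∈ (⟨insert x (σ.A.erase σ.alpha), insert σ.alpha (σ.B.erase x),
            σ.C, σ.D⟩ : Cube).A := by
          rcases hmτ with hm | hm
          · have h := hm.1; rw [hta] at h; exact h
          · have h : (⟨insert x (σ.A.erase σ.alpha), insert σ.alpha (σ.B.erase x),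
                σ.C, σ.D⟩ : Cube).alpha ∈ (⟨insert x (σ.A.erase σ.alpha),
                insert σ.alpha (σ.B.erase x), σ.C, σ.D⟩ : Cube).A := by
              rw [hm.1]; simp
            rw [hta] at h; exact h
        exact Finset.disjoint_left.mp tAB hαtA hαtB
    · -- move x from B' to C'
      rcases Finset.mem_insert.mp hx with rfl | hxB
      · -- x = alpha : good case, alpha strictly increases
        subst hτe
        rw [Finset.erase_insert hαnB] at tAne ⊢
        have hmem := alpha_mem (σ := ⟨σ.A.erase σ.alpha, σ.B, insert σ.alpha σ.C, σ.D⟩) tAne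
        simp only [mkA, mkB, Finset.mem_union, Finset.mem_erase] at hmem
        rcases hmem with ⟨hne', hmem⟩ | hmem
        · exact lt_of_le_of_ne (alpha_le (Finset.mem_union_left _ hmem)) (Ne.symm hne')
        · refine lt_of_le_of_ne (alpha_le (Finset.mem_union_right _ hmem)) (fun h => hαnB (h ▸ hmem))
      · -- x ∈ B : contradiction as in case 1
        exfalso
        have hxα : σ.alpha ≠ x := fun h => hαnB (h ▸ hxB)
        subst hτe
        rw [Finset.erase_insert_of_ne hxα] at tAB hmτ
        have hta : Cube.alpha ⟨σ.A.erase σ.alpha, insert σ.alpha (σ.B.erase x),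
            insert x σ.C, σ.D⟩ = σ.alpha := by
          apply alpha_eq
          · simp
          · intro y hy
            simp only [mkA, mkB, Finset.mem_union, Finset.mem_insert, Finset.mem_erase] at hy
            rcases hy with ⟨-, hy⟩ | (rfl | ⟨-, hy⟩)
            · exact alpha_le (Finset.mem_union_left _ hy)
            · exact le_refl _
            · exact alpha_le (Finset.mem_union_right _ hy)
        have hαtB : σ.alpha ∈ insert σ.alpha (σ.B.erase x) := by simp
        have hαtA : σ.alpha ∈ σ.A.erase σ.alpha := by
          rcases hmτ with hm | hm
          · have := hm.1; rw [hta] at this; exact this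
          · have : σ.alpha ∈ (⟨σ.A.erase σ.alpha, insert σ.alpha (σ.B.erase x),
                insert x σ.C, σ.D⟩ : Cube).A := by rw [hm.1, hta]; simp
            exact this
        simp at hαtA
    · -- x ∈ D moved to A : impossible by card
      exfalso
      rw [hτe] at hDc
      simp only [mkD] at hDc
      rw [Finset.card_erase_of_mem hx] at hDc
      have := Finset.card_pos.mpr ⟨x, hx⟩
      omega
    · -- x ∈ D moved to C : impossible by card
      exfalso
      rw [hτe] at hDc
      simp only [mkD] at hDc
      rw [Finset.card_erase_of_mem hx] at hDc
      have := Finset.card_pos.mpr ⟨x, hx⟩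
      omega
  · -- σ ∈ M2down
    refine ⟨fun h1 => (not_M1_M2 h1 h2).elim, fun _ => ?_⟩
    obtain ⟨hA, hβC, hC2, hαβ⟩ := h2
    have hnM1 : ¬ M1down σ := fun h1 => not_M1_M2 h1 ⟨hA, hβC, hC2, hαβ⟩
    have hβnB : σ.beta ∉ σ.B := Finset.disjoint_right.mp dBC hβC
    have hβnA : σ.beta ∉ σ.A := Finset.disjoint_right.mp dAC hβC
    have hαA : σ.alpha ∈ σ.A := by rw [hA]; simp
    have hμ : muPlus σ = ⟨σ.A, insert σ.beta σ.B, σ.C.erase σ.beta, σ.D⟩ := by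
      unfold muPlus; rw [if_neg hnM1]
    rw [hμ] at hc
    simp only [Covers, mkA, mkB, mkC, mkD] at hc
    rcases hc with ⟨x, hx, hτe⟩ | ⟨x, hx, hτe⟩ | ⟨x, hx, hτe⟩ | ⟨x, hx, hτe⟩
    · -- move x from B' to A' : lands in M1down, alpha preserved
      rcases Finset.mem_insert.mp hx with rfl | hxB
      · -- x = beta
        subst hτe
        rw [Finset.erase_insert hβnB]
        have hta : Cube.alpha ⟨insert σ.beta σ.A, σ.B, σ.C.erase σ.beta, σ.D⟩
            = σ.alpha := by
          apply alpha_eq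
          · simp [hαA]
          · intro y hy
            simp only [mkA, mkB, Finset.mem_union, Finset.mem_insert] at hy
            rcases hy with (rfl | hy) | hy
            · exact le_of_lt hαβ
            · exact alpha_le (Finset.mem_union_left _ hy)
            · exact alpha_le (Finset.mem_union_right _ hy)
        refine ⟨⟨by rw [hta]; simp [hαA], ?_⟩, hta⟩
        · simp only [mkA]
          rw [Finset.card_insert_of_notMem hβnA, hA]
          simp
      · -- x ∈ B
        have hβx : σ.beta ≠ x := fun h => hβnB (h ▸ hxB)
        have hxnA : x ∉ σ.A := Finset.disjoint_right.mp dAB hxB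
        subst hτe
        rw [Finset.erase_insert_of_ne hβx]
        have hta : Cube.alpha ⟨insert x σ.A, insert σ.beta (σ.B.erase x),
            σ.C.erase σ.beta, σ.D⟩ = σ.alpha := by
          apply alpha_eq
          · simp [hαA]
          · intro y hy
            simp only [mkA, mkB, Finset.mem_union, Finset.mem_insert, Finset.mem_erase] at hy
            rcases hy with (rfl | hy) | (rfl | ⟨-, hy⟩)
            · exact alpha_le (Finset.mem_union_right _ hxB)
            · exact alpha_le (Finset.mem_union_left _ hy)
            · exact le_of_lt hαβ
            · exact alpha_le (Finset.mem_union_right _ hy)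
        refine ⟨⟨by rw [hta]; simp [hαA], ?_⟩, hta⟩
        simp only [mkA]
        rw [Finset.card_insert_of_notMem hxnA, hA]
        simp
    · -- move x from B' to C'
      rcases Finset.mem_insert.mp hx with rfl | hxB
      · -- x = beta : τ = σ
        exfalso
        apply hne
        rw [hτe, Finset.erase_insert hβnB, Finset.insert_erase hβC]
      · -- x ∈ B : contradiction with Mdown τ
        exfalso
        have hβx : σ.beta ≠ x := fun h => hβnB (h ▸ hxB)
        subst hτe
        rw [Finset.erase_insert_of_ne hβx] at tBC hmτ
        have htb : Cube.beta ⟨σ.A, insert σ.beta (σ.B.erase x),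
            insert x (σ.C.erase σ.beta), σ.D⟩ = σ.beta := by
          apply beta_eq
          · simp
          · intro y hy
            simp only [mkB, mkC, Finset.mem_union, Finset.mem_insert, Finset.mem_erase] at hy
            rcases hy with (rfl | ⟨-, hy⟩) | (rfl | ⟨-, hy⟩)
            · exact le_refl _
            · exact beta_ge (Finset.mem_union_left _ hy)
            · exact beta_ge (Finset.mem_union_left _ hxB)
            · exact beta_ge (Finset.mem_union_right _ hy)
        rcases hmτ with hm | hm
        · have := hm.2
          simp only [mkA] at this
          rw [hA] at this
          simp at this
        · have hβτC := hm.2.1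
          rw [htb] at hβτC
          have hβτB : σ.beta ∈ insert σ.beta (σ.B.erase x) := by simp
          exact Finset.disjoint_left.mp tBC hβτB hβτC
    · -- x ∈ D to A : card
      exfalso
      rw [hτe] at hDc
      simp only [mkD] at hDc
      rw [Finset.card_erase_of_mem hx] at hDc
      have := Finset.card_pos.mpr ⟨x, hx⟩
      omega
    · -- x ∈ D to C : card
      exfalso
      rw [hτe] at hDc
      simp only [mkD] at hDc
      rw [Finset.card_erase_of_mem hx] at hDc
      have := Finset.card_pos.mpr ⟨x, hx⟩
      omega

/-- The matching `μ` on the cubes of `Ω_n` is acyclic: there is no cyclic sequence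
`σ₁, …, σ_q` (`q ≥ 2`) of distinct cubes of `Ω_n` in `M↓`, all of the same
dimension, with `μ₊(σ_i) ≻ σ_{i+1}` cyclically. -/
theorem matching_acyclic (n : ℕ) (hn : 2 ≤ n) :
    ¬ ∃ (q : ℕ) (σ : ℕ → Cube), 2 ≤ q ∧
      (∀ i < q, IsCube n (σ i)) ∧
      (∀ i < q, Mdown (σ i)) ∧
      (∀ i < q, ∀ j < q, σ i = σ j → i = j) ∧
      (∀ i < q, (σ i).dim = (σ 0).dim) ∧
      (∀ i < q, Covers (muPlus (σ i)) (σ ((i + 1) % q))) := by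
  rintro ⟨q, σ, hq, hcube, hdown, hdist, hdim, hcov⟩
  have hq0 : 0 < q := by omega
  have hlt : ∀ i < q, (i + 1) % q < q := fun i _ => Nat.mod_lt _ hq0
  have hneq : ∀ i < q, σ ((i + 1) % q) ≠ σ i := by
    intro i hi he
    have hij := hdist _ (hlt i hi) i hi he
    by_cases h' : i + 1 < q
    · rw [Nat.mod_eq_of_lt h'] at hij; omega
    · have hiq : i + 1 = q := by omega
      rw [hiq, Nat.mod_self] at hij; omega
  have hDle : ∀ i < q, (σ ((i + 1) % q)).D.card ≤ (σ i).D.card := by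
    intro i hi
    rcases hcov i hi with ⟨x, hx, he⟩ | ⟨x, hx, he⟩ | ⟨x, hx, he⟩ | ⟨x, hx, he⟩ <;>
      rw [he] <;> simp only [mkD, muPlus_D]
    · exact le_refl _
    · exact le_refl _
    · rw [muPlus_D] at *; exact Finset.card_erase_le
    · rw [muPlus_D] at *; exact Finset.card_erase_le
  have hDeq := cyc (fun i => (σ i).D.card) hDle
  have hkey : ∀ i < q, (M1down (σ i) → (σ i).alpha < (σ ((i + 1) % q)).alpha) ∧
      (M2down (σ i) → M1down (σ ((i + 1) % q)) ∧ (σ ((i + 1) % q)).alpha = (σ i).alpha) :=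
    fun i hi => key (hcube i hi) (hcube _ (hlt i hi)) (hdown _ (hlt i hi))
      (hcov i hi) (hneq i hi) (hDeq i hi) (hdown i hi)
  have hαle : ∀ i < q, (σ i).alpha ≤ (σ ((i + 1) % q)).alpha := by
    intro i hi
    rcases hdown i hi with h1 | h2
    · exact le_of_lt ((hkey i hi).1 h1)
    · exact le_of_eq ((hkey i hi).2 h2).2.symm
  have hαeq : ∀ i < q, (σ ((i + 1) % q)).alpha = (σ i).alpha := by
    have := cyc (α := ℕᵒᵈ) (fun i => OrderDual.toDual ((σ i).alpha))
      (fun i hi => hαle i hi)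
    intro i hi
    exact (this i hi)
  have hM2 : ∀ i < q, M2down (σ i) := by
    intro i hi
    rcases hdown i hi with h1 | h2
    · exfalso
      have hlt' := (hkey i hi).1 h1
      have heq := hαeq i hi
      omega
    · exact h2
  exact not_M1_M2 ((hkey 0 hq0).2 (hM2 0 hq0)).1 (hM2 _ (hlt 0 hq0))
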